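/- arXiv:1011.2417 — 3 statements merged into one kernel-verified Lean document; each statement's English description precedes it below -/
import Mathlib

section
/- Let a, b be positive reals with a ≠ b. The Genocchi-type numbers 𝒢_n(a,b), defined by 2t/(b^t+a^t) = Σ 𝒢_n(a,b) t^n/n!, satisfy 𝒢_n(a,b) = Σ_{k=0}^n (n choose k) (−1)^{n−k} (ln a)^{n−k} (ln b − ln a)^{k−1} G_k, where G_k are the classical Genocchi numbers. -/
/-!
Both generating functions are analytic near `0`, so their coefficients are iterated derivatives
at `0`. Since `b ^ t + a ^ t = a ^ t (e ^ {c t} + 1)` with `c = log b - log a`, the generating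
function of `𝒢` is `e ^ {-t log a} · c⁻¹ g (c t)` with `g s = 2 s / (e ^ s + 1)`, and the Leibniz
rule for the `n`-th derivative of this product gives the binomial sum.
-/

open Real Finset FormalMultilinearSeries

theorem hasFPowerSeriesOnBall_ofScalars_of_hasSum {𝕜 : Type*} [RCLike 𝕜] {c : ℕ → 𝕜}
    {f : 𝕜 → 𝕜} {r : NNReal} (hr : 0 < r)
    (h : ∀ t : 𝕜, ‖t‖ < r → HasSum (fun n => c n * t ^ n) (f t)) :
    HasFPowerSeriesOnBall f (ofScalars 𝕜 c) 0 r where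
  r_le := ENNReal.le_of_forall_nnreal_lt fun ρ hρ => by
    have hρr : ρ < r := by exact_mod_cast hρ
    have hlim := (h ((ρ : ℝ) : 𝕜) (by simpa using hρr)).summable.tendsto_atTop_zero.norm
    exact (ofScalars 𝕜 c).le_radius_of_tendsto (l := 0)
      (by simpa [ofScalars_norm, norm_mul, norm_pow] using hlim)
  r_pos := by simpa using hr
  hasSum := fun {y} hy => by
    simpa [ofScalars_apply_eq, mul_comm] using h y (by simpa using hy)

theorem HasFPowerSeriesAt.scalar_eq_iteratedDeriv_div_factorial {𝕜 : Type*}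
    [NontriviallyNormedField 𝕜] [CompleteSpace 𝕜] [CharZero 𝕜] {c : ℕ → 𝕜} {f : 𝕜 → 𝕜} {x : 𝕜}
    (h : HasFPowerSeriesAt f (ofScalars 𝕜 c) x) (n : ℕ) :
    c n = iteratedDeriv n f x / n.factorial :=
  congrFun (ofScalars_series_injective 𝕜 𝕜
    (h.eq_formalMultilinearSeries h.analyticAt.hasFPowerSeriesAt)) n

theorem iteratedDeriv_zero_eq_of_hasSum_div_factorial {𝕜 : Type*} [RCLike 𝕜] {c : ℕ → 𝕜}
    {f : 𝕜 → 𝕜} {r : ℝ} (hr : 0 < r)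
    (h : ∀ t : 𝕜, ‖t‖ < r → HasSum (fun n => c n * t ^ n / n.factorial) (f t)) (n : ℕ) :
    iteratedDeriv n f 0 = c n := by
  lift r to NNReal using hr.le
  have hf := hasFPowerSeriesOnBall_ofScalars_of_hasSum (c := fun n => c n / n.factorial)
    (by exact_mod_cast hr) fun t ht => by simpa only [div_mul_eq_mul_div] using h t ht
  have hcn := hf.hasFPowerSeriesAt.scalar_eq_iteratedDeriv_div_factorial n
  rwa [div_left_inj' (by exact_mod_cast n.factorial_ne_zero), eq_comm] at hcn

/-- `k - 1` is truncated subtraction; the case `k = 0` holds because `g 0 = 0`. -/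
theorem iteratedDeriv_inv_mul_comp_const_mul_zero {𝕜 : Type*} [NontriviallyNormedField 𝕜]
    {g : 𝕜 → 𝕜} {k : ℕ} (hg : ContDiff 𝕜 k g) (hg0 : g 0 = 0) {c : 𝕜} (hc : c ≠ 0) :
    iteratedDeriv k (fun t => c⁻¹ * g (c * t)) 0 = c ^ (k - 1) * iteratedDeriv k g 0 := by
  simp only [iteratedDeriv_const_mul_field, iteratedDeriv_comp_const_mul hg, mul_zero]
  rcases k with _ | k
  · simp [hg0]
  · rw [pow_succ', mul_assoc, inv_mul_cancel_left₀ hc, Nat.add_sub_cancel]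

theorem rpow_add_rpow_eq_rpow_mul_exp_add_one {a b : ℝ} (ha : 0 < a) (hb : 0 < b) (t : ℝ) :
    b ^ t + a ^ t = a ^ t * (exp ((log b - log a) * t) + 1) := by
  rw [rpow_def_of_pos ha, rpow_def_of_pos hb, mul_add, ← exp_add]
  ring_nf

theorem genocchi_type_numbers_expansion
    (a b : ℝ) (ha : 0 < a) (hb : 0 < b) (hab : a ≠ b)
    (𝒢 : ℕ → ℝ)
    (h𝒢 : ∀ t : ℝ, |t| < Real.pi / |Real.log a - Real.log b| →
      HasSum (fun n : ℕ => 𝒢 n * t ^ n / n.factorial) (2 * t / (b ^ t + a ^ t)))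
    (G : ℕ → ℝ)
    (hG : ∀ t : ℝ, |t| < Real.pi →
      HasSum (fun n : ℕ => G n * t ^ n / n.factorial) (2 * t / (Real.exp t + 1))) :
    ∀ n : ℕ, 𝒢 n =
      ∑ k ∈ Finset.range (n + 1), (n.choose k : ℝ) * (-1) ^ (n - k) *
        (Real.log a) ^ (n - k) * (Real.log b - Real.log a) ^ (k - 1) * G k := by
  intro n
  set g : ℝ → ℝ := fun s => 2 * s / (exp s + 1)
  have hlog : log a ≠ log b := fun h => hab (log_injOn_pos ha hb h)
  have hg (k : ℕ) : ContDiff ℝ k g := .div (by fun_prop) (by fun_prop) fun s => by positivity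
  have hF : (fun t : ℝ => 2 * t / (b ^ t + a ^ t)) =
      (fun t => (log b - log a)⁻¹ * g ((log b - log a) * t)) * fun t => exp (-log a * t) := by
    funext t
    simp only [g, Pi.mul_apply]
    rw [rpow_add_rpow_eq_rpow_mul_exp_add_one ha hb, rpow_def_of_pos ha, neg_mul, exp_neg]
    field_simp
  rw [← iteratedDeriv_zero_eq_of_hasSum_div_factorial
      (div_pos pi_pos (abs_pos.2 (sub_ne_zero.2 hlog)))
      fun t ht => h𝒢 t (by rwa [← Real.norm_eq_abs]),
    hF, iteratedDeriv_mul (by fun_prop) (by fun_prop)]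
  refine sum_congr rfl fun k _ => ?_
  rw [iteratedDeriv_inv_mul_comp_const_mul_zero (hg k) (by simp [g]) (sub_ne_zero.2 hlog.symm),
    iteratedDeriv_zero_eq_of_hasSum_div_factorial pi_pos
      fun t ht => hG t (by rwa [← Real.norm_eq_abs]),
    iteratedDeriv_exp_const_mul, neg_pow]
  simp only [mul_zero, exp_zero, mul_one]
  ring
end

section
/- Let a, b, c be positive reals with a ≠ b and let x, y be real. Then 𝒢_n(x+y;a,b,c) = Σ_{k=0}^n (n choose k) 𝒢_k(x;a,b,c) (y ln c)^{n−k}. -/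
open Real Finset

/-!
Both sides are exponential-generating-function coefficients. Since
`c ^ ((x + y) t) = c ^ (x t) · exp (y log c · t)`, the generating function at `x + y` is the
Cauchy product of the one at `x` with the exponential series of `y log c · t`, whose coefficients
are binomial convolutions. Both generating series converge on the same ball around `0`, and the
coefficients of a power series are determined by its sum on a ball.
-/

theorem eq_zero_of_hasSum_mul_pow_zero {𝕜 : Type*} [NontriviallyNormedField 𝕜]
    {a : ℕ → 𝕜} {r : ℝ} (hr : 0 < r) (h : ∀ t : 𝕜, ‖t‖ < r → HasSum (fun n => a n * t ^ n) 0) :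
    a = 0 := by
  obtain ⟨t, ht₀, htr⟩ := NormedField.exists_norm_lt 𝕜 hr
  set p := FormalMultilinearSeries.ofScalars 𝕜 a
  have hradius : (‖t‖₊ : ENNReal) ≤ p.radius := by
    refine p.le_radius_of_tendsto (l := 0) ?_
    simpa [p, FormalMultilinearSeries.ofScalars_norm, norm_pow] using
      (h t htr).summable.tendsto_atTop_zero.norm
  have hp : HasFPowerSeriesOnBall (fun _ => (0 : 𝕜)) p 0 ‖t‖₊ := by
    refine ⟨hradius, by simpa using ht₀, fun {y} hy => ?_⟩
    have hy : ‖y‖ < r := by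
      rw [Metric.mem_eball, edist_zero_right, enorm_eq_nnnorm, ENNReal.coe_lt_coe] at hy
      exact (NNReal.coe_lt_coe.mpr hy).trans htr
    simpa [p, FormalMultilinearSeries.ofScalars_apply_eq, mul_comm] using h y hy
  exact (FormalMultilinearSeries.ofScalars_series_eq_zero (E := 𝕜)).mp
    hp.hasFPowerSeriesAt.eq_zero

theorem egf_coeff_eq_of_hasSum {𝕜 : Type*} [NontriviallyNormedField 𝕜] [CharZero 𝕜]
    {f g : ℕ → 𝕜} {F : 𝕜 → 𝕜} {r : ℝ} (hr : 0 < r)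
    (hf : ∀ t : 𝕜, ‖t‖ < r → HasSum (fun n => f n * t ^ n / n.factorial) (F t))
    (hg : ∀ t : 𝕜, ‖t‖ < r → HasSum (fun n => g n * t ^ n / n.factorial) (F t)) :
    f = g := by
  have h := eq_zero_of_hasSum_mul_pow_zero (a := fun n => (f n - g n) / n.factorial) hr
    fun t ht => by simpa [sub_mul, sub_div, div_mul_eq_mul_div] using (hf t ht).sub (hg t ht)
  funext n
  simpa [sub_eq_zero, Nat.factorial_ne_zero] using congr_fun h n

theorem egf_cauchy_term (f g : ℕ → ℝ) (t : ℝ) (n : ℕ) :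
    ∑ k ∈ range (n + 1),
        f k * t ^ k / k.factorial * (g (n - k) * t ^ (n - k) / (n - k).factorial) =
      (∑ k ∈ range (n + 1), (n.choose k : ℝ) * f k * g (n - k)) * t ^ n / n.factorial := by
  rw [sum_mul, sum_div]
  refine sum_congr rfl fun k hk => ?_
  have hkn : k ≤ n := Nat.lt_succ_iff.mp (mem_range.mp hk)
  rw [Nat.cast_choose ℝ hkn, ← pow_mul_pow_sub t hkn]
  field_simp

theorem HasSum.egf_mul {f g : ℕ → ℝ} {t A B : ℝ}
    (hf : HasSum (fun n => f n * t ^ n / n.factorial) A)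
    (hg : HasSum (fun n => g n * t ^ n / n.factorial) B) :
    HasSum (fun n => (∑ k ∈ range (n + 1), (n.choose k : ℝ) * f k * g (n - k)) * t ^ n /
      n.factorial) (A * B) := by
  have h := hasSum_sum_range_mul_of_summable_norm ((summable_norm_iff (E := ℝ)).mpr hf.summable)
    ((summable_norm_iff (E := ℝ)).mpr hg.summable)
  rw [hf.tsum_eq, hg.tsum_eq] at h
  exact h.congr_fun fun n => (egf_cauchy_term f g t n).symm

theorem hasSum_egf_rpow_mul {c : ℝ} (hc : 0 < c) (y t : ℝ) :
    HasSum (fun n => (y * Real.log c) ^ n * t ^ n / n.factorial) (c ^ (y * t)) := by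
  have h := NormedSpace.expSeries_div_hasSum_exp (y * Real.log c * t)
  rw [← Real.exp_eq_exp_ℝ] at h
  rw [rpow_def_of_pos hc, mul_left_comm, ← mul_assoc]
  simpa only [mul_pow] using h

theorem genocchi_type_polynomials_addition
    (a b c : ℝ) (ha : 0 < a) (hb : 0 < b) (hc : 0 < c) (hab : a ≠ b)
    (𝒢P : ℕ → ℝ → ℝ)
    (h𝒢P : ∀ x t : ℝ, |t| < Real.pi / |Real.log a - Real.log b| →
      HasSum (fun n : ℕ => 𝒢P n x * t ^ n / n.factorial)
        (2 * t / (b ^ t + a ^ t) * c ^ (x * t))) :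
    ∀ (n : ℕ) (x y : ℝ), 𝒢P n (x + y) =
      ∑ k ∈ Finset.range (n + 1), (n.choose k : ℝ) * 𝒢P k x * (y * Real.log c) ^ (n - k) := by
  intro n x y
  have hr : 0 < π / |Real.log a - Real.log b| :=
    div_pos pi_pos (abs_pos.mpr (sub_ne_zero.mpr fun h => hab (log_injOn_pos ha hb h)))
  have hconv : ∀ t : ℝ, |t| < π / |Real.log a - Real.log b| → HasSum
      (fun m => (∑ k ∈ range (m + 1), (m.choose k : ℝ) * 𝒢P k x * (y * Real.log c) ^ (m - k)) *
        t ^ m / m.factorial) (2 * t / (b ^ t + a ^ t) * c ^ ((x + y) * t)) := fun t ht => by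
    rw [add_mul, rpow_add hc, ← mul_assoc]
    exact (h𝒢P x t ht).egf_mul (hasSum_egf_rpow_mul hc y t)
  exact congr_fun (egf_coeff_eq_of_hasSum hr (h𝒢P (x + y)) hconv) n
end

section
/- For every positive real b and all n ≥ 1, the Genocchi-type polynomials with parameters (1, b, b) satisfy the reflection-type recurrence 𝒢_n(x+1; 1, b, b) = 2n (ln b)^{n−1} x^{n−1} − 𝒢_n(x; 1, b, b). -/
/-!
Adding the generating functions at `x + 1` and `x` clears the denominator:
`F(x + 1, t) + F(x, t) = 2 t b^{x t} = ∑ 2 k (x log b)^{k - 1} t^k / k!`.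
Comparing coefficients of the two power series on the disc `|t| < π / |log b|` gives
`𝒢_n(x + 1) + 𝒢_n(x) = 2 n (x log b)^{n - 1}`.
-/

open Real Finset
open scoped Nat

section PowerSeriesUniqueness

variable {𝕜 : Type*} [NontriviallyNormedField 𝕜]

lemma hasFPowerSeriesOnBall_ofScalars_of_hasSum_s14 {c : ℕ → 𝕜} {f : 𝕜 → 𝕜} {r : ℝ}
    (hf : ∀ t : 𝕜, ‖t‖ < r → HasSum (fun n => c n * t ^ n) (f t))
    {t₀ : 𝕜} (ht₀ : 0 < ‖t₀‖) (ht₀r : ‖t₀‖ < r) :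
    HasFPowerSeriesOnBall f (FormalMultilinearSeries.ofScalars 𝕜 c) 0 ‖t₀‖₊ := by
  refine ⟨?_, by simpa using ht₀, fun {y} hy => ?_⟩
  · refine FormalMultilinearSeries.le_radius_of_tendsto _ (l := 0) ?_
    simpa [FormalMultilinearSeries.ofScalars_norm, norm_mul, norm_pow]
      using (hf t₀ ht₀r).summable.tendsto_atTop_zero.norm
  · have hy : ‖y‖ < ‖t₀‖ := by simpa using hy
    simpa [FormalMultilinearSeries.ofScalars_apply_eq, mul_comm] using hf y (hy.trans ht₀r)

theorem eq_of_hasSum_mul_pow_eq {c d : ℕ → 𝕜} {f : 𝕜 → 𝕜} {r : ℝ} (hr : 0 < r)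
    (hc : ∀ t : 𝕜, ‖t‖ < r → HasSum (fun n => c n * t ^ n) (f t))
    (hd : ∀ t : 𝕜, ‖t‖ < r → HasSum (fun n => d n * t ^ n) (f t)) : c = d := by
  obtain ⟨t₀, ht₀, ht₀r⟩ := NormedField.exists_norm_lt 𝕜 hr
  exact FormalMultilinearSeries.ofScalars_series_injective 𝕜 𝕜 <|
    (hasFPowerSeriesOnBall_ofScalars_of_hasSum_s14 hc ht₀ ht₀r).hasFPowerSeriesAt.eq_formalMultilinearSeries
      (hasFPowerSeriesOnBall_ofScalars_of_hasSum_s14 hd ht₀ ht₀r).hasFPowerSeriesAt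

end PowerSeriesUniqueness

lemma hasSum_mul_pow_sub_one_div_factorial_mul_pow (a t : ℝ) :
    HasSum (fun k : ℕ => k * a ^ (k - 1) / k ! * t ^ k) (t * exp (a * t)) := by
  refine (hasSum_nat_add_iff' 1).mp ?_
  rw [sum_range_one, Nat.cast_zero, zero_mul, zero_div, zero_mul, sub_zero, exp_eq_exp_ℝ]
  refine ((NormedSpace.expSeries_div_hasSum_exp (a * t)).mul_left t).congr_fun fun m => ?_
  rw [Nat.add_sub_cancel, Nat.factorial_succ]
  push_cast
  field_simp
  ring

lemma genocchi_generating_function_shift_add {b : ℝ} (hb : 0 < b) (x t : ℝ) :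
    2 * t / (b ^ t + (1 : ℝ) ^ t) * b ^ ((x + 1) * t) + 2 * t / (b ^ t + (1 : ℝ) ^ t) * b ^ (x * t)
      = 2 * (t * exp (log b * x * t)) := by
  have hbt : 0 < b ^ t := rpow_pos_of_pos hb t
  rw [one_rpow, add_mul, one_mul, rpow_add hb, rpow_def_of_pos hb (x * t), ← mul_assoc]
  field_simp

theorem genocchi_type_reflection_recurrence
    (b : ℝ) (hb : 0 < b) (hb1 : b ≠ 1)
    (𝒢P : ℕ → ℝ → ℝ)
    (h𝒢P : ∀ x t : ℝ, |t| < Real.pi / |Real.log 1 - Real.log b| →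
      HasSum (fun n : ℕ => 𝒢P n x * t ^ n / n.factorial)
        (2 * t / (b ^ t + (1 : ℝ) ^ t) * b ^ (x * t))) :
    ∀ (n : ℕ), 1 ≤ n → ∀ x : ℝ,
      𝒢P n (x + 1) = 2 * n * (Real.log b) ^ (n - 1) * x ^ (n - 1) - 𝒢P n x := by
  intro n _ x
  have hlog : log b ≠ 0 := log_ne_zero_of_pos_of_ne_one hb hb1
  have hr : 0 < π / |log 1 - log b| := by simp [pi_pos, hlog]
  have hcoeff := eq_of_hasSum_mul_pow_eq hr
    (c := fun k => (𝒢P k (x + 1) + 𝒢P k x) / k !)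
    (d := fun k => 2 * (k * (log b * x) ^ (k - 1) / k !))
    (f := fun t => 2 * (t * exp (log b * x * t)))
    (fun t ht => by
      rw [← genocchi_generating_function_shift_add hb]
      exact ((h𝒢P (x + 1) t ht).add (h𝒢P x t ht)).congr_fun fun k => by ring)
    (fun t ht => ((hasSum_mul_pow_sub_one_div_factorial_mul_pow _ t).mul_left 2).congr_fun
      fun k => by ring)
  have hcoeff_n := congrFun hcoeff n
  field_simp at hcoeff_n
  rw [mul_pow] at hcoeff_n
  linarith
end
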